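/- arXiv:2506.22825 — 2 statements merged into one kernel-verified Lean document; each statement's English description precedes it below -/
import Mathlib

section
/- Every symmetral bimould A∈MU(R) is gantar-invariant, i.e. gantar(A)=A, and every alternal bimould A∈LU(R) is mantar-invariant, i.e. mantar(A)=A. -/
namespace Flexion

variable {R : Type*} [CommRing R] [Algebra ℚ R]
variable {G H : Type*} [AddCommGroup G] [AddCommGroup H]

/-- A bimould over `R` with letters in `G × H`, given by its values on all
finite sequences of letters. -/
abbrev Mould (R G H : Type*) := List (G × H) → R

/-- The unit bimould `1`: value `1` on the empty sequence, `0` elsewhere. -/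
def muOne : Mould R G H := fun w => match w with | [] => 1 | _ => 0

/-- The uninflected product `mmu`. -/
def mmu (A B : Mould R G H) : Mould R G H := fun w =>
  ∑ i ∈ Finset.range (w.length + 1), A (w.take i) * B (w.drop i)

/-- `n`-fold `mmu`-power. -/
def mmuPow (A : Mould R G H) : ℕ → Mould R G H
  | 0 => muOne
  | n + 1 => mmu A (mmuPow A n)

/-- The operator `neg`. -/
def neg (A : Mould R G H) : Mould R G H := fun w => A (w.map fun p => (-p.1, -p.2))

/-- The operator `anti`. -/
def anti (A : Mould R G H) : Mould R G H := fun w => A w.reverse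

/-- The operator `pari`. -/
def pari (A : Mould R G H) : Mould R G H := fun w => (-1 : R) ^ w.length * A w

/-- The operator `mantar`; note `(-1)^(r-1) = -(-1)^r`. -/
def mantar (A : Mould R G H) : Mould R G H := fun w => -((-1 : R) ^ w.length * A w.reverse)

/-- The `v`-component of the last letter (0 for the empty sequence). -/
def lastV : List (G × H) → H
  | [] => 0
  | [p] => p.2
  | _ :: p :: ps => lastV (p :: ps)

/-- The `v`-component of the first letter (0 for the empty sequence). -/
def headV : List (G × H) → H
  | [] => 0
  | p :: _ => p.2

/-- Sum of the `u`-components. -/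
def uSum (w : List (G × H)) : G := (w.map Prod.fst).sum

/-- The operator `push`. -/
def push (A : Mould R G H) : Mould R G H := fun w =>
  match w with
  | [] => A []
  | x :: xs =>
      A ((-uSum (x :: xs), -lastV (x :: xs)) ::
          ((x :: xs).dropLast.map fun p => (p.1, p.2 - lastV (x :: xs))))

/-- The operator `swap`. -/
def swap (A : Mould R G H) : Mould R H G := fun w =>
  A (List.ofFn fun j : Fin w.length =>
      (headV (w.drop (w.length - 1 - (j : ℕ))) - headV (w.drop (w.length - (j : ℕ))),
       uSum (w.take (w.length - (j : ℕ)))))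

/-- Auxiliary fuelled definition of the `mmu`-inverse. -/
def invmuAux (A : Mould R G H) : ℕ → Mould R G H
  | 0 => fun w => match w with | [] => 1 | _ => 0
  | n + 1 => fun w =>
      match w with
      | [] => 1
      | x :: xs =>
          -∑ i ∈ Finset.range (xs.length + 1),
            A ((x :: xs).take (i + 1)) * invmuAux A n (xs.drop i)

/-- The `mmu`-inverse of a bimould of `MU(R)` (value `1` at the empty sequence). -/
def invmu (A : Mould R G H) : Mould R G H := fun w => invmuAux A w.length w

/-- `gantar := invmu ∘ pari ∘ anti`. -/
def gantar (A : Mould R G H) : Mould R G H := invmu (pari (anti A))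

/-- The flexion marker `⌈a⌉b`. -/
def flexUL (a b : List (G × H)) : List (G × H) :=
  match b with
  | [] => []
  | p :: bs => (uSum a + p.1, p.2) :: bs

/-- The flexion marker `a⌈b⌉`. -/
def flexUR : List (G × H) → List (G × H) → List (G × H)
  | [], _ => []
  | [p], b => [(p.1 + uSum b, p.2)]
  | p :: q :: ps, b => p :: flexUR (q :: ps) b

/-- The flexion marker `⌊a⌋b`. -/
def flexLL (a b : List (G × H)) : List (G × H) :=
  b.map fun p => (p.1, p.2 - lastV a)

/-- The flexion marker `a⌊b⌋`. -/
def flexLR (a b : List (G × H)) : List (G × H) :=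
  a.map fun p => (p.1, p.2 - headV b)

/-- All factorizations `w = a₁b₁c₁⋯a_sb_sc_s` into (possibly empty) consecutive
blocks with every `b_i ≠ ∅` and `c_i a_{i+1} ≠ ∅` for `1 ≤ i ≤ s-1`; the flag
records whether the first block `a₁` may be empty. -/
def facs {α : Type*} : Bool → List α → List (List (List α × List α × List α))
  | _, [] => [[]]
  | aFree, x :: xs =>
    (List.range ((x :: xs).length + 1)).flatMap fun i =>
      if i = 0 ∧ aFree = false then []
      else
        (List.range (((x :: xs).drop i).length)).flatMap fun j =>
          (List.range ((((x :: xs).drop i).drop (j + 1)).length + 1)).flatMap fun k =>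
            (facs (!((((x :: xs).drop i).drop (j + 1)).take k).isEmpty)
                ((((x :: xs).drop i).drop (j + 1)).drop k)).map
              (fun L =>
                ((x :: xs).take i,
                 ((x :: xs).drop i).take (j + 1),
                 (((x :: xs).drop i).drop (j + 1)).take k) :: L)
  termination_by _ w => w.length
  decreasing_by
    simp only [List.length_drop, List.length_cons]
    omega

/-- The block `⌈a⌉b⌈c⌉` attached to a factorization triple `(a, b, c)`. -/
def blockArg (t : List (G × H) × List (G × H) × List (G × H)) : List (G × H) :=
  flexUL t.1 (flexUR t.2.1 t.2.2)

/-- The operator `gaxit(A₁, A₂)`. -/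
def gaxit (A₁ A₂ : Mould R G H) (B : Mould R G H) : Mould R G H := fun w =>
  match w with
  | [] => B []
  | x :: xs =>
      ((facs true (x :: xs)).map fun L =>
        B (L.flatMap blockArg) *
          (L.map fun t => A₁ (flexLR t.1 t.2.1) * A₂ (flexLL t.2.1 t.2.2)).prod).sum

/-- `gamit(A) := gaxit(A, 1)`. -/
def gamit (A : Mould R G H) : Mould R G H → Mould R G H := gaxit A muOne

/-- `ganit(A) := gaxit(1, A)`. -/
def ganit (A : Mould R G H) : Mould R G H → Mould R G H := gaxit muOne A

/-- `garit(B) := gaxit(B, invmu(B))`. -/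
def garit (B : Mould R G H) : Mould R G H → Mould R G H := gaxit B (invmu B)

/-- `gari(A, B) := mmu(garit(B)(A), B)`. -/
def gari (A B : Mould R G H) : Mould R G H := mmu (garit B A) B

/-- The `gari`-inverse (via choice; for `B ∈ MU(R)` it is the unique two-sided
`gari`-inverse of `B`). -/
noncomputable def invgari (B : Mould R G H) : Mould R G H :=
  letI := Classical.propDecidable
  if h : ∃ C : Mould R G H, gari C B = muOne ∧ gari B C = muOne then h.choose else muOne

/-- `gani(A, B) := mmu(B, ganit(B)(A))`. -/
def gani (A B : Mould R G H) : Mould R G H := mmu B (ganit B A)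

/-- The `gani`-inverse (via choice). -/
noncomputable def invgani (A : Mould R G H) : Mould R G H :=
  letI := Classical.propDecidable
  if h : ∃ C : Mould R G H, gani C A = muOne ∧ gani A C = muOne then h.choose else muOne

/-- The pair operation `gaxi`. -/
def gaxi (p q : Mould R G H × Mould R G H) : Mould R G H × Mould R G H :=
  (mmu (gaxit q.1 q.2 p.1) q.1, mmu q.2 (gaxit q.1 q.2 p.2))

/-- The operator `amit(X)`. -/
def amit (X : Mould R G H) (B : Mould R G H) : Mould R G H := fun w =>
  ∑ i ∈ Finset.range (w.length + 1), ∑ j ∈ Finset.range (w.length + 1),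
    if i < j ∧ j < w.length then
      X (w.take i ++ flexUL ((w.drop i).take (j - i)) (w.drop j)) *
        B (flexLR ((w.drop i).take (j - i)) (w.drop j))
    else 0

/-- The operator `anit(X)`. -/
def anit (X : Mould R G H) (B : Mould R G H) : Mould R G H := fun w =>
  ∑ i ∈ Finset.range (w.length + 1), ∑ j ∈ Finset.range (w.length + 1),
    if 0 < i ∧ i < j then
      X (flexUR (w.take i) ((w.drop i).take (j - i)) ++ w.drop j) *
        B (flexLL (w.take i) ((w.drop i).take (j - i)))
    else 0

/-- `arit(X) := amit(X) - anit(X)`. -/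
def arit (X : Mould R G H) (B : Mould R G H) : Mould R G H := fun w =>
  amit X B w - anit X B w

/-- `preari(A, B) := arit(B)(A) + mmu(A, B)`. -/
def preari (A B : Mould R G H) : Mould R G H := fun w => arit B A w + mmu A B w

/-- `ari(A, B) := preari(A, B) - preari(B, A)`. -/
def ari (A B : Mould R G H) : Mould R G H := fun w => preari A B w - preari B A w

/-- Left-nested `preari`-powers: `preari(A, A, …, A)` (`n` arguments). -/
def preariPow (A : Mould R G H) : ℕ → Mould R G H
  | 0 => muOne
  | 1 => A
  | n + 2 => preari (preariPow A (n + 1)) A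

/-- `expari(A) = 1 + Σ_{n≥1} preari(A,…,A)/n!`; the sum is computed pointwise,
using that the `n`-th term vanishes in lengths `< n`. -/
def expari (A : Mould R G H) : Mould R G H := fun w =>
  ∑ n ∈ Finset.range (w.length + 1), (n.factorial : ℚ)⁻¹ • preariPow A n w

/-- The bimoulds `fre_r`: `fre_1 := E`, `fre_{r+1} := arit(fre_r)(E)`. -/
def fre (E : Mould R G H) : ℕ → Mould R G H
  | 0 => fun _ => 0
  | 1 => E
  | n + 2 => arit (fre E (n + 1)) E

/-- Flexion units. -/
structure IsFlexionUnit (E : Mould R G H) : Prop where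
  empty : E [] = 0
  support : ∀ w : List (G × H), 2 ≤ w.length → E w = 0
  parity : ∀ (u : G) (v : H), E [(-u, -v)] = -E [(u, v)]
  tripartite : ∀ (u₁ u₂ : G) (v₁ v₂ : H),
    E [(u₁, v₁)] * E [(u₂, v₂)] =
      E [(u₁, v₁ - v₂)] * E [(u₁ + u₂, v₂)] + E [(u₁ + u₂, v₁)] * E [(u₂, v₂ - v₁)]

/-- A bimould `M` is push-neutral if `(id + push + ⋯ + push^{∘r})(M)` vanishes
in each length `r`. -/
def PushNeutral (M : Mould R G H) : Prop :=
  ∀ w : List (G × H), ∑ i ∈ Finset.range (w.length + 1), push^[i] M w = 0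

/-- `fez := invmu(1 - E)`. -/
def fez (E : Mould R G H) : Mould R G H := invmu (muOne - E)

/-- The bimould `fes`, by its explicit formula
`fes(u₁,…,u_r; v₁,…,v_r) = ∏ᵢ E(u₁+⋯+uᵢ; vᵢ − v_{i+1})` with `v_{r+1} := 0`. -/
def fesExpl (E : Mould R G H) : Mould R G H := fun w =>
  ∏ i ∈ Finset.range w.length,
    E [(uSum (w.take (i + 1)), headV (w.drop i) - headV (w.drop (i + 1)))]

/-- All shuffles of two sequences (with multiplicity). -/
def shuffles {α : Type*} : List α → List α → List (List α)
  | [], w => [w]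
  | x :: xs, [] => [x :: xs]
  | x :: xs, y :: ys =>
      ((shuffles xs (y :: ys)).map (x :: ·)) ++ ((shuffles (x :: xs) ys).map (y :: ·))
  termination_by a b => a.length + b.length
  decreasing_by
    · simp only [List.length_cons]; omega
    · simp only [List.length_cons]; omega

/-- Symmetrality. -/
def Symmetral (A : Mould R G H) : Prop :=
  ∀ w w' : List (G × H), w ≠ [] → w' ≠ [] →
    ((shuffles w w').map A).sum = A w * A w'

/-- Alternality. -/
def Alternal (A : Mould R G H) : Prop :=
  ∀ w w' : List (G × H), w ≠ [] → w' ≠ [] →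
    ((shuffles w w').map A).sum = 0

/-- `gepar(A) := mmu(anti(swap(A)), swap(A))`. -/
def gepar (A : Mould R G H) : Mould R H G := mmu (anti (swap A)) (swap A)

/-- `der`: multiplication by the length. -/
def der (A : Mould R G H) : Mould R G H := fun w => (w.length : R) * A w

/-- `slash(A) := gari(neg(A), invgari(A))`. -/
noncomputable def slash (A : Mould R G H) : Mould R G H := gari (neg A) (invgari A)

/-- `crash(B) := mmu((push∘swap∘invmu∘invgari∘swap)(B), (swap∘invgari∘swap)(B))`. -/
noncomputable def crash (B : Mould R G H) : Mould R G H :=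
  mmu (push (swap (invmu (invgari (swap B))))) (swap (invgari (swap B)))

/-- Formal derivative of a power series. -/
noncomputable def psDeriv (g : PowerSeries R) : PowerSeries R :=
  PowerSeries.mk fun m => ((m + 1 : ℕ) : R) * PowerSeries.coeff (R := R) (m + 1) g

/-- `f_*(x) = Σ_{r≥1} ε_r x^{r+1}`. -/
noncomputable def fstarPS (ε : ℕ → R) : PowerSeries R :=
  PowerSeries.mk fun m => if 2 ≤ m then ε (m - 1) else 0

/-- `exp(f_*(x) d/dx)(x)`, computed coefficientwise (only finitely many terms
contribute to each coefficient, since `f_* ∈ x²R[[x]]`). -/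
noncomputable def expDX (ε : ℕ → R) : PowerSeries R :=
  PowerSeries.mk fun m =>
    ∑ n ∈ Finset.range (m + 1),
      (n.factorial : ℚ)⁻¹ •
        PowerSeries.coeff (R := R) m ((fun g => fstarPS ε * psDeriv g)^[n] PowerSeries.X)

/-- `ε` is the family of coefficients of the infinitesimal generator of
`f ∈ GIFF_x(R)`. -/
noncomputable def IsGenerator (ε : ℕ → R) (f : PowerSeries R) : Prop :=
  expDX ε = f

/-- The mould `Σ_{r≥1} ε_r · fre_r` associated to a flexion unit `E` and a
coefficient family `ε`. -/
def freSum (E : Mould R G H) (ε : ℕ → R) : Mould R G H :=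
  fun w => ε w.length * fre E w.length w

/-- `Se(f) := expari(Σ_{r≥1} ε_r^f · fre_r)` where `ε^f` is the family of
coefficients of the infinitesimal generator of `f`. -/
def SeGen (E : Mould R G H) (ε : ℕ → R) : Mould R G H := expari (freSum E ε)

/-- The power series `re(x) = 1 - exp(-x)`. -/
noncomputable def rePS (R : Type*) [CommRing R] [Algebra ℚ R] : PowerSeries R :=
  PowerSeries.mk fun m =>
    if m = 0 then 0 else algebraMap ℚ R ((-1 : ℚ) ^ (m + 1) / m.factorial)


/-- All factorizations `w = a₁x₁c₁⋯a_tx_tc_t` into consecutive blocks in which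
every `x_j` is a single letter and the blocks `a_j, c_j` may be empty. -/
def sfacs {α : Type*} : List α → List (List (List α × α × List α))
  | [] => [[]]
  | x :: xs =>
      (List.range (xs.length + 1)).flatMap fun i =>
        (List.range (((x :: xs).drop (i + 1)).length + 1)).flatMap fun k =>
          (sfacs (((x :: xs).drop (i + 1)).drop k)).map fun L =>
            ((x :: xs).take i, (x :: xs).getD i x, ((x :: xs).drop (i + 1)).take k) :: L
  termination_by w => w.length
  decreasing_by
    simp only [List.length_drop, List.length_cons]
    omega

/-- The inverse of a bijection of `BIMU(R)`. -/
noncomputable def minv (g : Mould R G H → Mould R G H) : Mould R G H → Mould R G H :=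
  @Function.invFun (Mould R G H) (Mould R G H) ⟨fun _ => 0⟩ g

/-- Membership of a pair of bimoulds in `MU(R) × MU(R)`. -/
def MUpair (p : Mould R G H × Mould R G H) : Prop := p.1 [] = 1 ∧ p.2 [] = 1


/-! The whole theorem rests on the antipode identity of the shuffle algebra: for a nonempty word
`w = x₁⋯x_r`, `Σᵢ (-1)ⁱ (xᵢ⋯x₁) ⧢ (x_{i+1}⋯x_r) = 0`. It telescopes once the shuffles are sorted
by the side their first letter comes from. Evaluated on a symmetral `A` the identity says
`mmu (pari (anti A)) A = 1`, so `pari (anti A)` is the `mmu`-inverse of `A`, and inverting gives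
`gantar A = A`. Evaluated on an alternal `A` only the two extreme terms survive, which is
`A w + (-1)^r A (reverse w) = 0`, i.e. `mantar A = A`. -/

theorem shuffles_nil_left {α : Type*} (w : List α) : shuffles [] w = [w] := by
  rw [shuffles]

theorem shuffles_nil_right {α : Type*} (w : List α) : shuffles w [] = [w] := by
  cases w <;> rw [shuffles]

theorem shuffles_cons_cons {α : Type*} (x y : α) (xs ys : List α) :
    shuffles (x :: xs) (y :: ys) =
      (shuffles xs (y :: ys)).map (x :: ·) ++ (shuffles (x :: xs) ys).map (y :: ·) := by
  rw [shuffles]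

section ShuffleAntipode

variable {α M : Type*} [AddCommGroup M] (f : List α → M)

theorem sum_map_shuffles_cons_cons (x y : α) (xs ys : List α) :
    ((shuffles (x :: xs) (y :: ys)).map f).sum =
      ((shuffles xs (y :: ys)).map fun s => f (x :: s)).sum +
        ((shuffles (x :: xs) ys).map fun s => f (y :: s)).sum := by
  simp only [shuffles_cons_cons, List.map_append, List.sum_append, List.map_map,
    Function.comp_def]

/-- The antipode identity generalized so that it can be proved by induction on `v`. -/
theorem alternating_sum_shuffles_reverse_take_append_cons (v : List α) :
    ∀ (z : α) (u : List α),
      ∑ k ∈ Finset.range (v.length + 1),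
          (-1 : ℤ) ^ k • ((shuffles ((v.take k).reverse ++ z :: u) (v.drop k)).map f).sum =
        ((shuffles u v).map fun s => f (z :: s)).sum := by
  induction v with
  | nil => simp [shuffles_nil_right]
  | cons x v ih =>
    intro z u
    rw [List.length_cons, Finset.sum_range_succ']
    simp only [List.take_succ_cons, List.drop_succ_cons, List.reverse_cons, List.append_assoc,
      List.singleton_append, pow_succ, mul_neg_one, neg_smul, Finset.sum_neg_distrib, ih x (z :: u),
      List.take_zero, List.drop_zero, List.reverse_nil, List.nil_append, pow_zero, one_smul,
      sum_map_shuffles_cons_cons]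
    abel

theorem alternating_sum_shuffles_reverse_take_drop {w : List α} (hw : w ≠ []) :
    ∑ k ∈ Finset.range (w.length + 1),
        (-1 : ℤ) ^ k • ((shuffles (w.take k).reverse (w.drop k)).map f).sum = 0 := by
  obtain ⟨x, v, rfl⟩ := List.exists_cons_of_ne_nil hw
  have h := alternating_sum_shuffles_reverse_take_append_cons f v x []
  rw [List.length_cons, Finset.sum_range_succ']
  simp [pow_succ, h, shuffles_nil_left]

end ShuffleAntipode

section MouldLemmas

omit [Algebra ℚ R] [AddCommGroup G] [AddCommGroup H]

theorem Symmetral.sum_map_shuffles {A : Mould R G H} (hA : Symmetral A) (h1 : A [] = 1)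
    (a b : List (G × H)) : ((shuffles a b).map A).sum = A a * A b := by
  rcases eq_or_ne a [] with rfl | ha
  · simp [shuffles_nil_left, h1]
  rcases eq_or_ne b [] with rfl | hb
  · simp [shuffles_nil_right, h1]
  exact hA a b ha hb

theorem mmu_cons (A B : Mould R G H) (x : G × H) (xs : List (G × H)) :
    mmu A B (x :: xs) =
      A [] * B (x :: xs) +
        ∑ i ∈ Finset.range (xs.length + 1), A ((x :: xs).take (i + 1)) * B (xs.drop i) := by
  rw [mmu, List.length_cons, Finset.sum_range_succ']
  simp only [List.take_zero, List.drop_zero, List.drop_succ_cons]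
  ring

theorem invmu_eq_of_mmu_eq_muOne {B C : Mould R G H} (hB : B [] = 1) (h : mmu B C = muOne) :
    invmu B = C := by
  have hC : C [] = 1 := by simpa [mmu, muOne, hB] using congrFun h []
  suffices key : ∀ n (w : List (G × H)), w.length ≤ n → invmuAux B n w = C w from
    funext fun w => key w.length w le_rfl
  intro n
  induction n with
  | zero =>
    intro w hw
    rw [List.length_eq_zero_iff.mp (Nat.le_zero.mp hw), invmuAux, hC]
  | succ n ih =>
    rintro (_ | ⟨x, xs⟩) hw
    · rw [invmuAux, hC]
    have hx := congrFun h (x :: xs)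
    rw [mmu_cons, hB, one_mul] at hx
    rw [invmuAux, eq_neg_of_add_eq_zero_left hx]
    refine congrArg Neg.neg (Finset.sum_congr rfl fun i _ => ?_)
    rw [ih _ (by simp only [List.length_drop, List.length_cons] at hw ⊢; omega)]

theorem Symmetral.mmu_pari_anti_eq_muOne {A : Mould R G H} (hA : Symmetral A) (h1 : A [] = 1) :
    mmu (pari (anti A)) A = muOne := by
  funext w
  rcases eq_or_ne w [] with rfl | hw
  · simp [mmu, pari, anti, muOne, h1]
  have key := alternating_sum_shuffles_reverse_take_drop A hw
  simp only [hA.sum_map_shuffles h1, zsmul_eq_mul, Int.cast_pow, Int.cast_neg, Int.cast_one] at key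
  obtain ⟨x, v, rfl⟩ := List.exists_cons_of_ne_nil hw
  show _ = (0 : R)
  rw [mmu, ← key]
  refine Finset.sum_congr rfl fun i hi => ?_
  rw [pari, anti, List.length_take_of_le (Finset.mem_range_succ_iff.mp hi), mul_assoc]

theorem Alternal.mantar_eq_self {A : Mould R G H} (hA : Alternal A) (h0 : A [] = 0) :
    mantar A = A := by
  funext w
  rcases eq_or_ne w [] with rfl | hw
  · simp [mantar, h0]
  have key := alternating_sum_shuffles_reverse_take_drop A hw
  have hpos : 0 < w.length := List.length_pos_iff.mpr hw
  rw [Finset.sum_eq_add 0 w.length hpos.ne ?_ (by simp) (by simp)] at key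
  · simp only [List.take_zero, List.drop_zero, List.reverse_nil, shuffles_nil_left, List.take_length,
      List.drop_length, shuffles_nil_right, List.map_singleton, List.sum_singleton, pow_zero,
      one_smul, zsmul_eq_mul, Int.cast_pow, Int.cast_neg, Int.cast_one] at key
    rw [mantar]
    linear_combination -key
  rintro k hk ⟨hk0, hkn⟩
  have hk := Finset.mem_range_succ_iff.mp hk
  rw [hA _ _ (by simp [hk0, hw]) (by simp; omega), smul_zero]

end MouldLemmas

/-- symmetral bimoulds are `gantar`-invariant and alternal bimoulds
are `mantar`-invariant. -/
theorem symmetral_gantar_alternal_mantar :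
    (∀ A : Mould R G H, A [] = 1 → Symmetral A → gantar A = A) ∧
    (∀ A : Mould R G H, A [] = 0 → Alternal A → mantar A = A) :=
  ⟨fun A h1 hA => invmu_eq_of_mmu_eq_muOne (by simp [pari, anti, h1]) (hA.mmu_pari_anti_eq_muOne h1),
    fun A h0 hA => hA.mantar_eq_self h0⟩

end Flexion
end

section
/- Let E be a bimould supported in length 1 (E(∅)=0 and E vanishes in all lengths ≥2). The following are equivalent: (1) E is a flexion unit; (2) both E and mmu(E,E) are push-neutral; (3) the n-fold product mmu(E,…,E) is push-neutral for every n≥1. -/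
/-!
Write `e(u; v) := E [(u, v)]`. Prefixing a word `w` of length `r` with the letter
`(-u₁ - ⋯ - u_r, 0)` gives a word of `u`-sum zero on which `push` acts as a cyclic rotation,
up to a common shift of all `v`'s, which the factors `e(u_q; v_q - v_p)` do not see. So, for a
flexion unit, the push-orbit sum of `mmu(E, …, E)` (`r` factors) is
`∑_p ∏_{q ≠ p} e(u_q; v_q - v_p)` over `r + 1` letters of `u`-sum zero. This vanishes by
induction on the number of letters: the tripartite identity merges two letters `a, b` into
letters with `u`-component `u_a + u_b`, and parity settles two letters. Conversely,
push-neutrality of `E` in length 1 is parity, and that of `mmu(E, E)` in length 2 is, given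
parity, the tripartite identity.
-/

namespace Flexion

variable {R G H : Type*}

lemma lastV_concat [AddCommGroup H] (l : List (G × H)) (p : G × H) : lastV (l ++ [p]) = p.2 := by
  induction l with
  | nil => rfl
  | cons a l ih => cases l <;> simp_all [lastV]

def vShift [AddCommGroup H] (c : H) (l : List (G × H)) : List (G × H) :=
  l.map fun p => (p.1, p.2 - c)

lemma vShift_vShift [AddCommGroup H] (c d : H) (l : List (G × H)) :
    vShift c (vShift d l) = vShift (d + c) l := by
  simp [vShift, Function.comp_def, sub_sub]

lemma rotate_vShift [AddCommGroup H] (c : H) (l : List (G × H)) (n : ℕ) :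
    (vShift c l).rotate n = vShift c (l.rotate n) :=
  (List.map_rotate _ _ _).symm

section Words

variable [AddCommGroup G] [AddCommGroup H]

def pushWord : List (G × H) → List (G × H)
  | [] => []
  | x :: xs => (-uSum (x :: xs), -lastV (x :: xs)) ::
      ((x :: xs).dropLast.map fun p => (p.1, p.2 - lastV (x :: xs)))

lemma push_apply (A : Mould R G H) (w : List (G × H)) : push A w = A (pushWord w) := by
  cases w <;> rfl

lemma push_iterate_apply (A : Mould R G H) (k : ℕ) (w : List (G × H)) :
    push^[k] A w = A (pushWord^[k] w) := by
  induction k generalizing w with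
  | zero => rfl
  | succ k ih => rw [Function.iterate_succ_apply', push_apply, ih, ← Function.iterate_succ_apply]

@[simp]
lemma length_pushWord (w : List (G × H)) : (pushWord w).length = w.length := by
  cases w <;> simp [pushWord]

@[simp]
lemma length_pushWord_iterate (k : ℕ) (w : List (G × H)) :
    (pushWord^[k] w).length = w.length := by
  induction k generalizing w with
  | zero => rfl
  | succ k ih => rw [Function.iterate_succ_apply, ih, length_pushWord]

lemma pushWord_concat (l : List (G × H)) (p : G × H) :
    pushWord (l ++ [p]) = (-uSum (l ++ [p]), -p.2) :: vShift p.2 l := by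
  cases l with
  | nil => simp [pushWord, lastV, vShift]
  | cons a l =>
    have hlast : lastV ((a :: l) ++ [p]) = p.2 := lastV_concat _ p
    have hdrop : ((a :: l) ++ [p]).dropLast = a :: l := List.dropLast_concat ..
    rw [List.cons_append] at hlast hdrop ⊢
    simp only [pushWord, hlast, hdrop, vShift]

lemma pushWord_singleton (u : G) (v : H) : pushWord [(u, v)] = [(-u, -v)] := by
  simp [pushWord, uSum, lastV]

lemma pushWord_pair (u₁ u₂ : G) (v₁ v₂ : H) :
    pushWord [(u₁, v₁), (u₂, v₂)] = [(-(u₁ + u₂), -v₂), (u₁, v₁ - v₂)] := by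
  simp [pushWord, uSum, lastV]

def closeWord (w : List (G × H)) : List (G × H) := (-uSum w, 0) :: w

lemma closeWord_pushWord_concat (l : List (G × H)) (p : G × H) :
    closeWord (pushWord (l ++ [p])) =
      vShift p.2 ((closeWord (l ++ [p])).rotate (l ++ [p]).length) := by
  have hrot :
      (closeWord (l ++ [p])).rotate (l ++ [p]).length = p :: (-uSum (l ++ [p]), 0) :: l := by
    rw [closeWord, ← List.cons_append, List.rotate_eq_drop_append_take (by simp),
      List.drop_left' (by simp), List.take_left' (by simp)]
    rfl
  rw [pushWord_concat, hrot]
  simp [closeWord, vShift, uSum, Function.comp_def]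

lemma closeWord_pushWord_iterate (w : List (G × H)) (k : ℕ) :
    ∃ c : H, closeWord (pushWord^[k] w) = vShift c ((closeWord w).rotate (k * w.length)) := by
  induction k with
  | zero => exact ⟨0, by simp [vShift]⟩
  | succ k ih =>
    obtain ⟨c, hc⟩ := ih
    rw [Function.iterate_succ_apply']
    rcases (pushWord^[k] w).eq_nil_or_concat with hnil | ⟨l, p, hlp⟩
    · have hw : w.length = 0 := by simpa [hnil] using (length_pushWord_iterate k w).symm
      exact ⟨c, by simpa [hnil, hw, pushWord] using hc⟩
    · rw [List.concat_eq_append] at hlp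
      have hlen : (l ++ [p]).length = w.length := by rw [← hlp, length_pushWord_iterate]
      refine ⟨c + p.2, ?_⟩
      rw [hlp, closeWord_pushWord_concat, hlen, ← hlp, hc, rotate_vShift,
        List.rotate_rotate, vShift_vShift, add_one_mul]

end Words

section Pivot

variable [CommRing R] [AddCommGroup H] (E : Mould R G H)

def relProd (x : H) (l : List (G × H)) : R := (l.map fun q => E [(q.1, q.2 - x)]).prod

@[simp]
lemma relProd_nil (x : H) : relProd E x [] = 1 := rfl

@[simp]
lemma relProd_cons (x : H) (p : G × H) (l : List (G × H)) :
    relProd E x (p :: l) = E [(p.1, p.2 - x)] * relProd E x l := rfl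

@[simp]
lemma relProd_append (x : H) (l₁ l₂ : List (G × H)) :
    relProd E x (l₁ ++ l₂) = relProd E x l₁ * relProd E x l₂ := by
  simp [relProd]

lemma relProd_vShift (x c : H) (l : List (G × H)) :
    relProd E (x - c) (vShift c l) = relProd E x l := by
  simp [relProd, vShift, Function.comp_def]

def headRelProd : List (G × H) → R
  | [] => 1
  | p :: l => relProd E p.2 l

lemma headRelProd_vShift (c : H) (l : List (G × H)) :
    headRelProd E (vShift c l) = headRelProd E l := by
  cases l with
  | nil => rfl
  | cons p l => exact relProd_vShift E p.2 c l

lemma headRelProd_closeWord [AddCommGroup G] (w : List (G × H)) :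
    headRelProd E (closeWord w) = (w.map fun p => E [p]).prod := by
  simp [headRelProd, closeWord, relProd]

/-- `pivotSum E pre L = ∑_{p ∈ L} ∏_{q ∈ pre ++ L, q ≠ p} E(u_q; v_q - v_p)`: only the letters
of `L` serve as pivots `p`. -/
def pivotSum : List (G × H) → List (G × H) → R
  | _, [] => 0
  | pre, p :: l => relProd E p.2 (pre ++ l) + pivotSum (pre ++ [p]) l

lemma sum_headRelProd_rotate_append (pre L : List (G × H)) :
    ∑ j ∈ Finset.range L.length, headRelProd E ((L ++ pre).rotate j) = pivotSum E pre L := by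
  induction L generalizing pre with
  | nil => simp [pivotSum]
  | cons p l ih =>
    rw [List.length_cons, Finset.sum_range_succ', List.rotate_zero]
    simp only [List.cons_append, List.rotate_cons_succ, List.append_assoc, ih]
    simp only [headRelProd, pivotSum, relProd_append]
    ring

lemma sum_headRelProd_rotate (L : List (G × H)) :
    ∑ j ∈ Finset.range L.length, headRelProd E (L.rotate j) = pivotSum E [] L := by
  simpa using sum_headRelProd_rotate_append E [] L

end Pivot

lemma sum_range_rotate_mul_pred {α β : Type*} [AddCommMonoid β] (f : List α → β)
    (l : List α) :
    ∑ k ∈ Finset.range l.length, f (l.rotate (k * (l.length - 1))) =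
      ∑ k ∈ Finset.range l.length, f (l.rotate k) := by
  rcases hn : l.length with _ | n
  · simp
  have hrot : ∀ k ∈ Finset.range (n + 1), l.rotate (k * n) = l.rotate (n + 1 - k) := by
    intro k hk
    rw [← List.rotate_mod l (k * n), ← List.rotate_mod l (n + 1 - k), hn]
    rcases k with _ | k
    · simp
    · have hk : (k + 1) * n = n - k + k * (n + 1) := by
        rw [Finset.mem_range] at hk
        zify [show k ≤ n by omega]
        ring
      rw [hk, Nat.add_mul_mod_self_right, show n + 1 - (k + 1) = n - k by omega]
  rw [Nat.add_sub_cancel]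
  calc ∑ k ∈ Finset.range (n + 1), f (l.rotate (k * n))
      = ∑ k ∈ Finset.range (n + 1), f (l.rotate (n + 1 - k)) :=
        Finset.sum_congr rfl fun k hk => congrArg f (hrot k hk)
    _ = ∑ k ∈ Finset.range (n + 1), f (l.rotate (k + 1)) := by
        rw [← Finset.sum_range_reflect]
        refine Finset.sum_congr rfl fun k hk => ?_
        rw [Finset.mem_range] at hk
        congr 2
        omega
    _ = ∑ k ∈ Finset.range (n + 1), f (l.rotate k) := by
        rw [Finset.sum_range_succ, Finset.sum_range_succ' (fun k => f (l.rotate k)), ← hn,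
          List.rotate_length, List.rotate_zero]

section FlexionUnit

variable [CommRing R] [AddCommGroup G] [AddCommGroup H] {E : Mould R G H}

lemma IsFlexionUnit.tripartite_sub (hE : IsFlexionUnit E) (u₁ u₂ : G) (v₁ v₂ x : H) :
    E [(u₁, v₁ - x)] * E [(u₂, v₂ - x)] =
      E [(u₁, v₁ - v₂)] * E [(u₁ + u₂, v₂ - x)] +
        E [(u₁ + u₂, v₁ - x)] * E [(u₂, v₂ - v₁)] := by
  simpa only [sub_sub_sub_cancel_right] using hE.tripartite u₁ u₂ (v₁ - x) (v₂ - x)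

lemma IsFlexionUnit.pivotSum_cons_cons (hE : IsFlexionUnit E) (a b : G × H)
    (post L : List (G × H)) :
    pivotSum E (a :: b :: post) L =
      E [(a.1, a.2 - b.2)] * pivotSum E ((a.1 + b.1, b.2) :: post) L +
        E [(b.1, b.2 - a.2)] * pivotSum E ((a.1 + b.1, a.2) :: post) L := by
  induction L generalizing post with
  | nil => simp [pivotSum]
  | cons q l ih =>
    simp only [pivotSum, List.cons_append, ih, relProd_cons]
    linear_combination relProd E q.2 (post ++ l) * hE.tripartite_sub a.1 b.1 a.2 b.2 q.2

theorem IsFlexionUnit.pivotSum_eq_zero (hE : IsFlexionUnit E) (a b : G × H) (l : List (G × H))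
    (hsum : a.1 + b.1 + uSum l = 0) : pivotSum E [] (a :: b :: l) = 0 := by
  induction l generalizing a b with
  | nil =>
    have hb : b.1 = -a.1 := eq_neg_of_add_eq_zero_right (by simpa [uSum] using hsum)
    simp only [pivotSum, List.nil_append, List.append_nil, relProd_cons, relProd_nil, hb, mul_one,
      add_zero]
    rw [← neg_sub a.2 b.2, hE.parity, neg_add_cancel]
  | cons c l ih =>
    have hmerge : ∀ x : H, pivotSum E [(a.1 + b.1, x)] (c :: l) = -relProd E x (c :: l) := by
      intro x
      have h := ih (a.1 + b.1, x) c (by simpa [uSum, add_assoc] using hsum)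
      rw [pivotSum, List.nil_append, List.nil_append] at h
      linear_combination h
    rw [pivotSum, List.nil_append, pivotSum]
    simp only [List.nil_append, List.singleton_append]
    rw [hE.pivotSum_cons_cons, hmerge, hmerge]
    simp only [relProd_cons]
    ring

theorem IsFlexionUnit.sum_prod_pushWord_iterate (hE : IsFlexionUnit E) {w : List (G × H)}
    (hw : w ≠ []) :
    ∑ k ∈ Finset.range (w.length + 1), ((pushWord^[k] w).map fun p => E [p]).prod = 0 := by
  have hterm (k : ℕ) : ((pushWord^[k] w).map fun p => E [p]).prod =
      headRelProd E ((closeWord w).rotate (k * ((closeWord w).length - 1))) := by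
    obtain ⟨c, hc⟩ := closeWord_pushWord_iterate w k
    rw [← headRelProd_closeWord, hc, headRelProd_vShift]
    rfl
  have hlen : (closeWord w).length = w.length + 1 := rfl
  rw [Finset.sum_congr rfl fun k _ => hterm k, ← hlen, sum_range_rotate_mul_pred,
    sum_headRelProd_rotate]
  obtain ⟨a, l, rfl⟩ := List.exists_cons_of_ne_nil hw
  exact hE.pivotSum_eq_zero _ _ _ (by simp [uSum])

end FlexionUnit

section Moulds

variable [CommRing R] {E : Mould R G H}

lemma mmu_cons_of_support (h0 : E [] = 0)
    (hsupp : ∀ w : List (G × H), 2 ≤ w.length → E w = 0)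
    (B : Mould R G H) (x : G × H) (xs : List (G × H)) : mmu E B (x :: xs) = E [x] * B xs := by
  rw [mmu, Finset.sum_eq_single 1]
  · rfl
  · intro i hi hi1
    rcases i with _ | _ | i
    · simp [h0]
    · exact absurd rfl hi1
    · rw [hsupp _ (by simp at hi ⊢; omega), zero_mul]
  · simp

lemma mmuPow_apply (h0 : E [] = 0) (hsupp : ∀ w : List (G × H), 2 ≤ w.length → E w = 0)
    (n : ℕ) (w : List (G × H)) :
    mmuPow E n w = if w.length = n then (w.map fun p => E [p]).prod else 0 := by
  induction n generalizing w with
  | zero => cases w <;> simp [mmuPow, muOne]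
  | succ n ih =>
    cases w with
    | nil => simp [mmuPow, mmu, h0]
    | cons x xs => simp [mmuPow, mmu_cons_of_support h0 hsupp, ih]

lemma mmuPow_one (h0 : E [] = 0) (hsupp : ∀ w : List (G × H), 2 ≤ w.length → E w = 0) :
    mmuPow E 1 = E := by
  funext w
  rw [mmuPow_apply h0 hsupp]
  rcases w with _ | ⟨p, _ | ⟨q, w⟩⟩
  · simp [h0]
  · simp
  · simp [hsupp (p :: q :: w) (by simp)]

variable [AddCommGroup G] [AddCommGroup H]

lemma pushNeutral_iff (M : Mould R G H) :
    PushNeutral M ↔ ∀ w, ∑ k ∈ Finset.range (w.length + 1), M (pushWord^[k] w) = 0 := by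
  simp only [PushNeutral, push_iterate_apply]

theorem IsFlexionUnit.pushNeutral_mmuPow (hE : IsFlexionUnit E) {n : ℕ} (hn : 1 ≤ n) :
    PushNeutral (mmuPow E n) := by
  rw [pushNeutral_iff]
  intro w
  by_cases hw : w.length = n
  · simp only [mmuPow_apply hE.empty hE.support, length_pushWord_iterate, if_pos hw]
    exact hE.sum_prod_pushWord_iterate (List.ne_nil_of_length_pos (by omega))
  · simp [mmuPow_apply hE.empty hE.support, hw]

lemma parity_of_pushNeutral (h : PushNeutral E) (u : G) (v : H) : E [(-u, -v)] = -E [(u, v)] := by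
  have h := (pushNeutral_iff E).1 h [(u, v)]
  simp only [List.length_singleton, Finset.sum_range_succ, Finset.sum_range_zero, zero_add,
    Function.iterate_zero_apply, Function.iterate_one, pushWord_singleton] at h
  linear_combination h

lemma tripartite_of_pushNeutral_mmu (h0 : E [] = 0)
    (hsupp : ∀ w : List (G × H), 2 ≤ w.length → E w = 0)
    (hpar : ∀ (u : G) (v : H), E [(-u, -v)] = -E [(u, v)]) (h : PushNeutral (mmu E E))
    (u₁ u₂ : G) (v₁ v₂ : H) :
    E [(u₁, v₁)] * E [(u₂, v₂)] =
      E [(u₁, v₁ - v₂)] * E [(u₁ + u₂, v₂)] + E [(u₁ + u₂, v₁)] * E [(u₂, v₂ - v₁)] := by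
  have h := (pushNeutral_iff _).1 h [(u₁, v₁), (u₂, v₂)]
  have hpush₂ :
      pushWord^[2] [(u₁, v₁), (u₂, v₂)] = [(u₂, v₂ - v₁), (-(u₁ + u₂), -v₁)] := by
    simp only [Function.iterate_succ_apply', Function.iterate_zero_apply, pushWord_pair,
      List.cons.injEq, Prod.mk.injEq, and_true]
    exact ⟨⟨by abel, by abel⟩, trivial, by abel⟩
  simp only [List.length_cons, List.length_nil, Finset.sum_range_succ, Finset.sum_range_zero,
    zero_add, Function.iterate_zero_apply, Function.iterate_one, pushWord_pair, hpush₂,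
    mmu_cons_of_support h0 hsupp, hpar] at h
  linear_combination h

lemma isFlexionUnit_of_pushNeutral (h0 : E [] = 0)
    (hsupp : ∀ w : List (G × H), 2 ≤ w.length → E w = 0) (h₁ : PushNeutral E)
    (h₂ : PushNeutral (mmu E E)) : IsFlexionUnit E :=
  ⟨h0, hsupp, parity_of_pushNeutral h₁,
    tripartite_of_pushNeutral_mmu h0 hsupp (parity_of_pushNeutral h₁) h₂⟩

end Moulds

end Flexion

namespace Flexion

variable {R : Type*} [CommRing R] [Algebra ℚ R]
variable {G H : Type*} [AddCommGroup G] [AddCommGroup H]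

set_option linter.unusedSectionVars false in
/-- characterizations of flexion units by push-neutrality. -/
theorem flexion_unit_tfae (E : Mould R G H) (h0 : E [] = 0)
    (hsupp : ∀ w : List (G × H), 2 ≤ w.length → E w = 0) :
    (IsFlexionUnit E ↔ PushNeutral E ∧ PushNeutral (mmu E E)) ∧
    (IsFlexionUnit E ↔ ∀ n : ℕ, 1 ≤ n → PushNeutral (mmuPow E n)) := by
  have hone : mmuPow E 1 = E := mmuPow_one h0 hsupp
  have htwo : mmuPow E 2 = mmu E E := by rw [mmuPow, hone]
  have hpows : (∀ n : ℕ, 1 ≤ n → PushNeutral (mmuPow E n)) →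
      PushNeutral E ∧ PushNeutral (mmu E E) :=
    fun h => ⟨hone ▸ h 1 le_rfl, htwo ▸ h 2 one_le_two⟩
  have hfwd (hE : IsFlexionUnit E) : ∀ n : ℕ, 1 ≤ n → PushNeutral (mmuPow E n) :=
    fun _ => hE.pushNeutral_mmuPow
  have hbwd : PushNeutral E → PushNeutral (mmu E E) → IsFlexionUnit E :=
    isFlexionUnit_of_pushNeutral h0 hsupp
  exact ⟨⟨fun hE => hpows (hfwd hE), fun h => hbwd h.1 h.2⟩,
    ⟨hfwd, fun h => (hpows h).elim hbwd⟩⟩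

end Flexion
end
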